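/- Let J ⊆ Φ⁺ be a nonempty order ideal of the root poset. Then there exists a simple root α_i ∈ J ∩ Δ such that one cannot find two distinct roots β₁ ≠ β₂ ∈ J with s_{α_i}β₁ ∈ Φ⁺ ∖ J and s_{α_i}β₂ ∈ Φ⁺ ∖ J. -/

import Mathlib

open InnerProductSpace

noncomputable section

variable {E : Type*} [NormedAddCommGroup E] [InnerProductSpace ℝ E]

/-- The reflection across the hyperplane orthogonal to `α`:
`s_α(x) = x − (2⟨α,x⟩/⟨α,α⟩)α`. -/
def sRefl (α x : E) : E := x - (2 * ⟪α, x⟫_ℝ / ⟪α, α⟫_ℝ) • α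

/-- `Φ` is a finite crystallographic (reduced) root system spanning `E`. -/
def IsRootSystem (Φ : Set E) : Prop :=
  Φ.Finite ∧ (0 : E) ∉ Φ ∧ Submodule.span ℝ Φ = ⊤ ∧
    (∀ α ∈ Φ, ∀ β ∈ Φ, sRefl α β ∈ Φ) ∧
    (∀ α ∈ Φ, ∀ β ∈ Φ, ∃ n : ℤ, 2 * ⟪α, β⟫_ℝ / ⟪α, α⟫_ℝ = (n : ℝ)) ∧
    (∀ α ∈ Φ, ∀ t : ℝ, t • α ∈ Φ → t = 1 ∨ t = -1)

/-- `b` is a base of the root system `Φ`: a basis of `E` consisting of roots such that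
every root is a linear combination of the base whose coefficients are either all
nonnegative integers or all nonpositive integers. -/
def IsBase (Φ : Set E) {r : ℕ} (b : Module.Basis (Fin r) ℝ E) : Prop :=
  (∀ i, b i ∈ Φ) ∧
    ∀ α ∈ Φ, (∀ i, ∃ k : ℕ, b.repr α i = (k : ℝ)) ∨ (∀ i, ∃ k : ℕ, b.repr α i = -(k : ℝ))

/-- The positive roots with respect to the base `b`. -/
def posRoots (Φ : Set E) {r : ℕ} (b : Module.Basis (Fin r) ℝ E) : Set E :=
  {α ∈ Φ | ∀ i, 0 ≤ b.repr α i}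

/-- The root poset order: `α ≤ β` iff `β − α` is a nonnegative combination of simple roots. -/
def rootLE {r : ℕ} (b : Module.Basis (Fin r) ℝ E) (α β : E) : Prop :=
  ∀ i, 0 ≤ b.repr (β - α) i

/-- `A` is an order ideal of the root poset. -/
def IsRootIdeal (Φ : Set E) {r : ℕ} (b : Module.Basis (Fin r) ℝ E) (A : Set E) : Prop :=
  A ⊆ posRoots Φ b ∧ ∀ α ∈ posRoots Φ b, ∀ β ∈ A, rootLE b α β → α ∈ A

/-- The Weyl group of `Φ`: the subgroup of linear automorphisms of `E` generated by the
reflections `s_α`, `α ∈ Φ`. -/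
def weylGroup (Φ : Set E) : Subgroup (E ≃ₗ[ℝ] E) :=
  Subgroup.closure {g | ∃ α ∈ Φ, ∀ x, g x = sRefl α x}

/-- The inversion set `I(w) = {α ∈ Φ⁺ : wα ∈ −Φ⁺}`. -/
def invSet (Φ : Set E) {r : ℕ} (b : Module.Basis (Fin r) ℝ E) (w : E ≃ₗ[ℝ] E) : Set E :=
  {α ∈ posRoots Φ b | -(w α) ∈ posRoots Φ b}

/-- The convex subset `W_D^A = {w ∈ W : D ⊆ I(w) ⊆ A}` of the Weyl group. -/
def convexSubset (Φ : Set E) {r : ℕ} (b : Module.Basis (Fin r) ℝ E) (D A : Set E) :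
    Set (E ≃ₗ[ℝ] E) :=
  {w | w ∈ weylGroup Φ ∧ D ⊆ invSet Φ b w ∧ invSet Φ b w ⊆ A}

/-- `δ_C(α) = |C_α|/|C|` where `C_α = {w ∈ C : wα ∈ −Φ⁺}`. -/
def delta (Φ : Set E) {r : ℕ} (b : Module.Basis (Fin r) ℝ E) (C : Set (E ≃ₗ[ℝ] E)) (α : E) : ℝ :=
  ({w ∈ C | -(w α) ∈ posRoots Φ b}.ncard : ℝ) / (C.ncard : ℝ)

end

/-!
Let `σ` be the sum of the roots in `J`. Its coordinates in the base are nonnegative and not all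
zero, so `0 < ⟪σ, σ⟫ = ∑ⱼ σⱼ ⟪αⱼ, σ⟫` gives a simple root `α = αᵢ` with `0 < ⟪α, σ⟫`. The roots
`β ∈ J` with `s_α β ∈ J` pair off under `s_α` with opposite values of `⟪α, β⟫`, so `⟪α, σ⟫` is
the sum of `⟪α, β⟫` over the roots `β ∈ J` that `s_α` moves out of `J`. Apart from `β = α`, which
contributes `⟪α, α⟫`, each such `β` has `s_α β ∈ Φ⁺` strictly above `β`, so its Cartan integer
is at most `-1` and it contributes at most `-⟪α, α⟫ / 2`. Positivity of the sum forces `α ∈ J`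
and at most one other such root.
-/

open Finset

section Reflection

variable {E : Type*} [NormedAddCommGroup E] [InnerProductSpace ℝ E]

theorem sub_sRefl (α x : E) : x - sRefl α x = (2 * ⟪α, x⟫_ℝ / ⟪α, α⟫_ℝ) • α :=
  sub_sub_cancel _ _

theorem inner_sRefl_right (α x : E) : ⟪α, sRefl α x⟫_ℝ = -⟪α, x⟫_ℝ := by
  rcases eq_or_ne α 0 with rfl | hα
  · simp
  have hαα : ⟪α, α⟫_ℝ ≠ 0 := inner_self_ne_zero.2 hα
  simp only [sRefl, inner_sub_right, real_inner_smul_right]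
  field_simp
  ring

theorem sRefl_sRefl (α x : E) : sRefl α (sRefl α x) = x := by
  have h := sub_sRefl α (sRefl α x)
  rw [inner_sRefl_right, mul_neg, neg_div, neg_smul, ← sub_sRefl α x] at h
  linear_combination (norm := module) -h

theorem sRefl_self (α : E) : sRefl α α = -α := by
  rcases eq_or_ne α 0 with rfl | hα
  · simp [sRefl]
  rw [sRefl, mul_div_assoc, div_self (inner_self_ne_zero.2 hα), mul_one, two_smul,
    sub_add_cancel_left]

theorem sum_inner_filter_sRefl_mem_eq_zero [DecidableEq E] (α : E) (s : Finset E) :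
    ∑ β ∈ s with sRefl α β ∈ s, ⟪α, β⟫_ℝ = 0 := by
  refine sum_involution (fun β _ => sRefl α β) (fun β _ => by rw [inner_sRefl_right]; ring)
    (fun β _ hβ hfix => hβ ?_) (fun β hβ => ?_) (fun β _ => sRefl_sRefl α β)
  · linarith [congrArg (⟪α, ·⟫_ℝ) hfix, inner_sRefl_right α β]
  · rw [mem_filter] at hβ ⊢
    exact ⟨hβ.2, by rw [sRefl_sRefl]; exact hβ.1⟩

theorem sum_inner_eq_sum_filter_sRefl_notMem [DecidableEq E] (α : E) (s : Finset E) :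
    ∑ β ∈ s, ⟪α, β⟫_ℝ = ∑ β ∈ s with sRefl α β ∉ s, ⟪α, β⟫_ℝ := by
  rw [← sum_filter_add_sum_filter_not s (fun β => sRefl α β ∈ s),
    sum_inner_filter_sRefl_mem_eq_zero, zero_add]

end Reflection

section Basis

variable {E ι : Type*} [NormedAddCommGroup E] [InnerProductSpace ℝ E] (b : Module.Basis ι ℝ E)

theorem Module.Basis.repr_sRefl_of_ne {i j : ι} (hji : j ≠ i) (x : E) :
    b.repr (sRefl (b i) x) j = b.repr x j := by
  simp [sRefl, hji.symm]

theorem Module.Basis.eq_smul_of_repr_eq_zero {x : E} {i : ι} (h : ∀ j ≠ i, b.repr x j = 0) :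
    x = b.repr x i • b i := by
  refine b.repr.injective (Finsupp.ext fun j => ?_)
  rcases eq_or_ne j i with rfl | hj
  · simp
  · simp [h j hj, hj.symm]

theorem Module.Basis.sum_ne_zero_of_repr_nonneg {s : Finset E}
    (hs : ∀ x ∈ s, ∀ j, 0 ≤ b.repr x j) (hne : ∃ x ∈ s, x ≠ 0) : ∑ x ∈ s, x ≠ 0 := by
  obtain ⟨x, hx, hx0⟩ := hne
  obtain ⟨j, hj⟩ : ∃ j, b.repr x j ≠ 0 := by
    by_contra! h
    exact hx0 (b.repr.map_eq_zero_iff.1 (Finsupp.ext h))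
  intro hsum
  have hle : b.repr x j ≤ ∑ y ∈ s, b.repr y j := single_le_sum (fun y hy => hs y hy j) hx
  rw [← Finsupp.finsetSum_apply, ← map_sum, hsum, map_zero, Finsupp.zero_apply] at hle
  exact hj (le_antisymm hle (hs x hx j))

theorem Module.Basis.exists_inner_pos_of_repr_nonneg [Fintype ι] {v : E}
    (hv : ∀ j, 0 ≤ b.repr v j) (hv0 : v ≠ 0) : ∃ j, 0 < ⟪b j, v⟫_ℝ := by
  by_contra! h
  have hvv : ⟪v, v⟫_ℝ = ∑ j, b.repr v j * ⟪b j, v⟫_ℝ := by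
    nth_rewrite 1 [← b.sum_repr v]
    simp only [sum_inner, real_inner_smul_left]
  have hnonpos : ∑ j, b.repr v j * ⟪b j, v⟫_ℝ ≤ 0 :=
    sum_nonpos fun j _ => mul_nonpos_of_nonneg_of_nonpos (hv j) (h j)
  linarith [real_inner_self_pos.2 hv0]

end Basis

section RootSystem

variable {E : Type*} [NormedAddCommGroup E] [InnerProductSpace ℝ E] {Φ : Set E} {r : ℕ}
  {b : Module.Basis (Fin r) ℝ E}

theorem neg_basis_notMem_posRoots (i : Fin r) : -b i ∉ posRoots Φ b := fun h =>
  absurd (h.2 i) (by simp)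

theorem sRefl_mem_posRoots (hΦ : IsRootSystem Φ) (hb : IsBase Φ b) {i : Fin r} {x : E}
    (hx : x ∈ posRoots Φ b) (hxi : x ≠ b i) : sRefl (b i) x ∈ posRoots Φ b := by
  have hroot : sRefl (b i) x ∈ Φ := hΦ.2.2.2.1 _ (hb.1 i) x hx.1
  rcases hb.2 _ hroot with hnonneg | hnonpos
  · exact ⟨hroot, fun j => by obtain ⟨k, hk⟩ := hnonneg j; rw [hk]; positivity⟩
  have hzero : ∀ j ≠ i, b.repr x j = 0 := fun j hj => by
    obtain ⟨k, hk⟩ := hnonpos j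
    rw [b.repr_sRefl_of_ne hj] at hk
    linarith [hx.2 j, k.cast_nonneg (α := ℝ)]
  have hx_eq := b.eq_smul_of_repr_eq_zero hzero
  rcases hΦ.2.2.2.2.2 _ (hb.1 i) _ (hx_eq ▸ hx.1) with h | h
  · exact absurd (by rw [hx_eq, h, one_smul]) hxi
  · exact absurd (hx_eq ▸ hx) (by rw [h, neg_one_smul]; exact neg_basis_notMem_posRoots i)

theorem rootLE_sRefl (i : Fin r) {x : E} (h : 0 ≤ 2 * ⟪b i, x⟫_ℝ / ⟪b i, b i⟫_ℝ) :
    rootLE b (sRefl (b i) x) x := fun j => by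
  rw [sub_sRefl, map_smul, Finsupp.smul_apply, b.repr_self, Finsupp.single_apply, smul_eq_mul]
  split_ifs <;> positivity

theorem IsRootIdeal.inner_le_of_sRefl_notMem {J : Set E} (hJ : IsRootIdeal Φ b J)
    (hΦ : IsRootSystem Φ) (hb : IsBase Φ b) {i : Fin r} {β : E} (hβ : β ∈ J) (hβi : β ≠ b i)
    (hout : sRefl (b i) β ∉ J) : ⟪b i, β⟫_ℝ ≤ -(⟪b i, b i⟫_ℝ / 2) := by
  obtain ⟨n, hn⟩ := hΦ.2.2.2.2.1 _ (hb.1 i) β (hJ.1 hβ).1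
  have hn_neg : n < 0 := by
    by_contra! hn0
    refine hout (hJ.2 _ (sRefl_mem_posRoots hΦ hb (hJ.1 hβ) hβi) β hβ (rootLE_sRefl i ?_))
    rw [hn]
    exact_mod_cast hn0
  have hn_le : (n : ℝ) ≤ -1 := by exact_mod_cast Int.le_sub_one_of_lt hn_neg
  have hαα : 0 < ⟪b i, b i⟫_ℝ := real_inner_self_pos.2 (b.ne_zero i)
  rw [div_eq_iff hαα.ne'] at hn
  nlinarith

end RootSystem

theorem Finset.mem_and_card_erase_le_one_of_sum_pos {ι : Type*} [DecidableEq ι] {s : Finset ι}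
    {f : ι → ℝ} {a : ι} {c : ℝ} (hc : 0 < c) (ha : f a ≤ 2 * c)
    (hf : ∀ x ∈ s.erase a, f x ≤ -c) (hs : 0 < ∑ x ∈ s, f x) :
    a ∈ s ∧ #(s.erase a) ≤ 1 := by
  have hrest : ∑ x ∈ s.erase a, f x ≤ #(s.erase a) * -c := by
    simpa using sum_le_card_nsmul _ _ _ hf
  by_cases has : a ∈ s
  · refine ⟨has, ?_⟩
    rw [← add_sum_erase _ _ has] at hs
    by_contra! hcard
    have : (2 : ℝ) ≤ #(s.erase a) := by exact_mod_cast hcard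
    nlinarith
  · rw [erase_eq_of_notMem has] at hrest
    nlinarith [(#s).cast_nonneg (α := ℝ)]

/-- Let `J ⊆ Φ⁺` be a nonempty order ideal of the root poset.  Then there
exists a simple root `α_i ∈ J` such that one cannot find two distinct roots
`β₁ ≠ β₂ ∈ J` with `s_{α_i}β₁ ∈ Φ⁺ ∖ J` and `s_{α_i}β₂ ∈ Φ⁺ ∖ J`. -/
theorem stmt6 {E : Type*} [NormedAddCommGroup E] [InnerProductSpace ℝ E]
    (Φ : Set E) (hΦ : IsRootSystem Φ) {r : ℕ} (b : Module.Basis (Fin r) ℝ E) (hb : IsBase Φ b)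
    (J : Set E) (hJ : IsRootIdeal Φ b J) (hJne : J.Nonempty) :
    ∃ i : Fin r, b i ∈ J ∧
      ¬∃ β₁ β₂ : E, β₁ ∈ J ∧ β₂ ∈ J ∧ β₁ ≠ β₂ ∧
        sRefl (b i) β₁ ∈ posRoots Φ b \ J ∧ sRefl (b i) β₂ ∈ posRoots Φ b \ J := by
  classical
  have hJfin : J.Finite := hΦ.1.subset fun β hβ => (hJ.1 hβ).1
  set s := hJfin.toFinset
  have hs_nonneg : ∀ β ∈ s, ∀ j, 0 ≤ b.repr β j := fun β hβ =>
    (hJ.1 (hJfin.mem_toFinset.1 hβ)).2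
  obtain ⟨β₀, hβ₀⟩ := hJne
  have hσ : ∑ β ∈ s, β ≠ 0 := b.sum_ne_zero_of_repr_nonneg hs_nonneg
    ⟨β₀, hJfin.mem_toFinset.2 hβ₀, fun h => hΦ.2.1 (h ▸ (hJ.1 hβ₀).1)⟩
  obtain ⟨i, hi⟩ := b.exists_inner_pos_of_repr_nonneg (fun j => by
    rw [map_sum, Finsupp.finsetSum_apply]; exact sum_nonneg fun β hβ => hs_nonneg β hβ j) hσ
  set α := b i
  set X := s.filter fun β => sRefl α β ∉ s
  have hX : ∀ β, β ∈ X ↔ β ∈ J ∧ sRefl α β ∉ J := by simp [X, s]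
  rw [inner_sum, sum_inner_eq_sum_filter_sRefl_notMem] at hi
  obtain ⟨hαX, hcard⟩ := mem_and_card_erase_le_one_of_sum_pos (f := (⟪α, ·⟫_ℝ))
    (half_pos (real_inner_self_pos.2 (b.ne_zero i))) (by linarith)
    (fun β hβ => hJ.inner_le_of_sRefl_notMem hΦ hb ((hX β).1 (mem_of_mem_erase hβ)).1
      (ne_of_mem_erase hβ) ((hX β).1 (mem_of_mem_erase hβ)).2) hi
  refine ⟨i, ((hX α).1 hαX).1, ?_⟩
  rintro ⟨β₁, β₂, hβ₁, hβ₂, hne, hexit₁, hexit₂⟩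
  have hmem : ∀ β ∈ J, sRefl α β ∈ posRoots Φ b \ J → β ∈ X.erase α := fun β hβ hexit =>
    mem_erase.2 ⟨by rintro rfl; exact neg_basis_notMem_posRoots i (sRefl_self α ▸ hexit.1),
      (hX β).2 ⟨hβ, hexit.2⟩⟩
  exact hcard.not_gt (one_lt_card.2 ⟨β₁, hmem β₁ hβ₁ hexit₁, β₂, hmem β₂ hβ₂ hexit₂, hne⟩)
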